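/- Fix ω ≥ 0 and ε > 0, and let μ be a quaternionic measure on the Borel sets of ℝ with ∫_ℝ e^{(ω+ε)|t|} d|μ|(t) < ∞. Then the quaternionic bilateral Laplace–Stieltjes transform f(s) = ∫_ℝ dμ(t)·e^{-st} (meaning ∫_ℝ h(t)·e^{-st} d|μ|(t) where μ = h d|μ|) is right slice regular on the strip {s ∈ ℍ : -(ω+ε) < Re(s) < ω+ε}: for every imaginary unit I ∈ 𝕊, the restriction f_I to ℂ_I satisfies (∂/∂x₀) f_I(x₀ + I x₁) + ((∂/∂x₁) f_I(x₀ + I x₁))·I = 0 on the strip. -/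

import Mathlib

open scoped Quaternion ENNReal
open MeasureTheory

noncomputable section

/-- An imaginary unit quaternion. -/
def QUnit (I : ℍ[ℝ]) : Prop := I.re = 0 ∧ ‖I‖ = 1

/-- The total variation of a quaternionic (vector) measure. -/
def qvar {α : Type*} [MeasurableSpace α] (μ : VectorMeasure α ℍ[ℝ]) (A : Set α) : ℝ≥0∞ :=
  ⨆ (π : ℕ → Set α) (_ : ∀ i, MeasurableSet (π i))
    (_ : Pairwise (Function.onFun Disjoint π)) (_ : (⋃ i, π i) = A),
    ∑' i, (‖μ (π i)‖₊ : ℝ≥0∞)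

/-- A pure imaginary unit quaternion squares to `-1`. -/
lemma stmt13.aux_sq (I : ℍ[ℝ]) (hre0 : I.re = 0) (hnorm1 : ‖I‖ = 1) : I * I = -1 := by
  have hnsq : Quaternion.normSq I = 1 := by
    rw [Quaternion.normSq_eq_norm_mul_self, hnorm1, one_mul]
  have hs : star I = -I := by ext <;> simp [hre0]
  have h2 := Quaternion.star_mul_self I
  rw [hs, hnsq] at h2
  have h3 : -(I * I) = 1 := by simpa using h2
  have := congrArg Neg.neg h3
  simpa using this

/-- The slice embedding `ℂ → ℍ` determined by a pure imaginary unit is an isometry. -/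
lemma stmt13.aux_norm (I : ℍ[ℝ]) (hre0 : I.re = 0) (hnorm1 : ‖I‖ = 1) (hI2 : I * I = -1)
    (z : ℂ) : ‖Complex.liftAux I hI2 z‖ = ‖z‖ := by
  have hnsq : Quaternion.normSq I = 1 := by
    rw [Quaternion.normSq_eq_norm_mul_self, hnorm1, one_mul]
  have hn' : I.imI ^ 2 + I.imJ ^ 2 + I.imK ^ 2 = 1 := by
    have := Quaternion.normSq_def' I
    rw [hnsq, hre0] at this
    nlinarith [this]
  have hq : Complex.liftAux I hI2 z = (z.re : ℍ[ℝ]) + z.im • I := by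
    rw [Complex.liftAux_apply]; rfl
  have hsq : ‖Complex.liftAux I hI2 z‖ ^ 2 = ‖z‖ ^ 2 := by
    rw [sq, sq, ← Quaternion.normSq_eq_norm_mul_self, hq,
      Complex.norm_mul_self_eq_normSq, Complex.normSq_apply, Quaternion.normSq_def']
    simp [hre0]
    nlinarith [hn']
  have h4 := Real.sqrt_sq (norm_nonneg (Complex.liftAux I hI2 z))
  rw [← h4, hsq, Real.sqrt_sq (norm_nonneg z)]

/-- The quaternionic exponential on a slice is the image of the complex exponential. -/
lemma stmt13.aux_exp (I : ℍ[ℝ]) (hI2 : I * I = -1) (u v t : ℝ) :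
    NormedSpace.exp (-(t • ((u : ℍ[ℝ]) + v • I)))
      = Complex.liftAux I hI2 (Complex.exp (-(↑t * (↑u + ↑v * Complex.I)))) := by
  set φ := Complex.liftAux I hI2
  have hφc : Continuous φ := φ.toLinearMap.continuous_of_finiteDimensional
  have h1 : ((u : ℍ[ℝ]) + v • I) = φ ((u : ℂ) + v • Complex.I) := by
    rw [map_add, _root_.map_smul, Complex.liftAux_apply_I]
    congr 1
    simpa using (φ.commutes u).symm
  have h2 : -(t • ((u : ℂ) + v • Complex.I)) = -(↑t * (↑u + ↑v * Complex.I)) := by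
    simp [Complex.real_smul]; ring
  rw [h1, ← _root_.map_smul, ← map_neg, ← NormedSpace.map_exp φ hφc, h2,
    Complex.exp_eq_exp_ℂ]

set_option maxHeartbeats 1000000 in
/-- Differentiation under the integral sign, in the real direction of a slice. -/
lemma stmt13.aux_D1 (m : Measure ℝ) [IsFiniteMeasure m] (h : ℝ → ℍ[ℝ])
    (hh : StronglyMeasurable h) (hh1 : ∀ t, ‖h t‖ = 1)
    (φ : ℂ →ₐ[ℝ] ℍ[ℝ]) (hφnorm : ∀ z : ℂ, ‖φ z‖ = ‖z‖)
    (c δ x₀ x₁ : ℝ) (hδ : 0 < δ)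
    (habs : ∀ u ∈ Metric.ball x₀ δ, |u| ≤ c - δ)
    (hexp_int : Integrable (fun t : ℝ => Real.exp (c * |t|)) m)
    (hbound_int : Integrable (fun t : ℝ => |t| * Real.exp ((c - δ) * |t|)) m) :
    Integrable (fun t => h t * φ (-(↑t * Complex.exp (-(↑t * (↑x₀ + ↑x₁ * Complex.I)))))) m ∧
    HasDerivAt (fun u : ℝ => ∫ t, h t * φ (Complex.exp (-(↑t * (↑u + ↑x₁ * Complex.I)))) ∂m)
      (∫ t, h t * φ (-(↑t * Complex.exp (-(↑t * (↑x₀ + ↑x₁ * Complex.I))))) ∂m) x₀ := by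
  have hφc : Continuous φ := φ.toLinearMap.continuous_of_finiteDimensional
  have hx₀ : |x₀| ≤ c - δ := habs x₀ (Metric.mem_ball_self hδ)
  have hre : ∀ t u v : ℝ, (-(↑t * (↑u + ↑v * Complex.I))).re = -(t * u) := by
    intro t u v; simp
  have hnormφ : ∀ (t : ℝ) (w : ℂ), ‖h t * φ w‖ = ‖w‖ := by
    intro t w
    rw [norm_mul, hh1, one_mul, hφnorm]
  have hmeasg : ∀ g : ℝ → ℂ, Continuous g →
      AEStronglyMeasurable (fun t => h t * φ (g t)) m := by
    intro g hg
    exact (hh.mul ((hφc.comp hg).stronglyMeasurable)).aestronglyMeasurable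
  exact hasDerivAt_integral_of_dominated_loc_of_deriv_le (𝕜 := ℝ) (μ := m) (x₀ := x₀)
    (F := fun (u : ℝ) (t : ℝ) => h t * φ (Complex.exp (-(↑t * (↑u + ↑x₁ * Complex.I)))))
    (F' := fun (u : ℝ) (t : ℝ) => h t * φ (-(↑t * Complex.exp (-(↑t * (↑u + ↑x₁ * Complex.I))))))
    (bound := fun t => |t| * Real.exp ((c - δ) * |t|)) (Metric.ball_mem_nhds x₀ hδ)
    (Filter.Eventually.of_forall fun u => hmeasg _ (by fun_prop))
    (by
      refine hexp_int.mono' (hmeasg _ (by fun_prop)) ?_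
      filter_upwards with t
      rw [hnormφ, Complex.norm_exp, hre]
      apply Real.exp_le_exp.2
      nlinarith [neg_abs_le (t * x₀), abs_mul t x₀, abs_nonneg t, abs_nonneg x₀,
        mul_le_mul_of_nonneg_left hx₀ (abs_nonneg t), hδ])
    (hmeasg _ (by fun_prop))
    (by
      filter_upwards with t u hu
      rw [hnormφ, norm_neg, norm_mul, Complex.norm_real, Real.norm_eq_abs, Complex.norm_exp, hre]
      have h2 : |u| ≤ c - δ := habs u hu
      gcongr |t| * ?_
      apply Real.exp_le_exp.2
      nlinarith [neg_abs_le (t * u), abs_mul t u, abs_nonneg t,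
        mul_le_mul_of_nonneg_left h2 (abs_nonneg t)])
    hbound_int
    (by
      filter_upwards with t u _
      have h0 : HasDerivAt (fun z : ℂ => -(↑t * (z + ↑x₁ * Complex.I))) (-(↑t * 1)) (u : ℂ) :=
        (((hasDerivAt_id _).add_const _).const_mul _).neg
      have hD : HasDerivAt (fun y : ℝ => Complex.exp (-(↑t * (↑y + ↑x₁ * Complex.I))))
          (-(↑t * Complex.exp (-(↑t * (↑u + ↑x₁ * Complex.I))))) u := by
        have h2 := h0.cexp.comp_ofReal
        convert h2 using 1
        ring
      have hD2 := (φ.toLinearMap.toContinuousLinearMap.hasFDerivAt.comp_hasDerivAt u hD)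
      exact hD2.const_mul (h t))

set_option maxHeartbeats 1000000 in
/-- Differentiation under the integral sign, in the imaginary direction of a slice. -/
lemma stmt13.aux_D2 (m : Measure ℝ) [IsFiniteMeasure m] (h : ℝ → ℍ[ℝ])
    (hh : StronglyMeasurable h) (hh1 : ∀ t, ‖h t‖ = 1)
    (φ : ℂ →ₐ[ℝ] ℍ[ℝ]) (hφnorm : ∀ z : ℂ, ‖φ z‖ = ‖z‖)
    (c δ x₀ x₁ : ℝ) (hδ : 0 < δ)
    (hx₀ : |x₀| ≤ c - δ)
    (hexp_int : Integrable (fun t : ℝ => Real.exp (c * |t|)) m)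
    (hbound_int : Integrable (fun t : ℝ => |t| * Real.exp ((c - δ) * |t|)) m) :
    Integrable (fun t => h t * φ (-(↑t * Complex.I * Complex.exp (-(↑t * (↑x₀ + ↑x₁ * Complex.I)))))) m ∧
    HasDerivAt (fun v : ℝ => ∫ t, h t * φ (Complex.exp (-(↑t * (↑x₀ + ↑v * Complex.I)))) ∂m)
      (∫ t, h t * φ (-(↑t * Complex.I * Complex.exp (-(↑t * (↑x₀ + ↑x₁ * Complex.I)))))
        ∂m) x₁ := by
  have hφc : Continuous φ := φ.toLinearMap.continuous_of_finiteDimensional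
  have hre : ∀ t u v : ℝ, (-(↑t * (↑u + ↑v * Complex.I))).re = -(t * u) := by
    intro t u v; simp
  have hnormφ : ∀ (t : ℝ) (w : ℂ), ‖h t * φ w‖ = ‖w‖ := by
    intro t w
    rw [norm_mul, hh1, one_mul, hφnorm]
  have hmeasg : ∀ g : ℝ → ℂ, Continuous g →
      AEStronglyMeasurable (fun t => h t * φ (g t)) m := by
    intro g hg
    exact (hh.mul ((hφc.comp hg).stronglyMeasurable)).aestronglyMeasurable
  have hbnd : ∀ t v : ℝ,
      ‖h t * φ (-(↑t * Complex.I * Complex.exp (-(↑t * (↑x₀ + ↑v * Complex.I)))))‖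
        ≤ |t| * Real.exp ((c - δ) * |t|) := by
    intro t v
    rw [hnormφ, norm_neg, norm_mul, norm_mul, Complex.norm_real, Real.norm_eq_abs, Complex.norm_I,
      Complex.norm_exp, hre, mul_one]
    gcongr |t| * ?_
    apply Real.exp_le_exp.2
    nlinarith [neg_abs_le (t * x₀), abs_mul t x₀, abs_nonneg t,
      mul_le_mul_of_nonneg_left hx₀ (abs_nonneg t)]
  have hδ' : 0 < (1 : ℝ) := one_pos
  refine hasDerivAt_integral_of_dominated_loc_of_deriv_le (𝕜 := ℝ) (μ := m) (x₀ := x₁)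
    (F := fun (v : ℝ) (t : ℝ) => h t * φ (Complex.exp (-(↑t * (↑x₀ + ↑v * Complex.I)))))
    (F' := fun (v : ℝ) (t : ℝ) =>
      h t * φ (-(↑t * Complex.I * Complex.exp (-(↑t * (↑x₀ + ↑v * Complex.I))))))
    (bound := fun t => |t| * Real.exp ((c - δ) * |t|)) (Metric.ball_mem_nhds x₁ hδ')
    (Filter.Eventually.of_forall fun v => hmeasg _ (by fun_prop))
    ?_ (hmeasg _ (by fun_prop))
    (by
      filter_upwards with t v _
      exact hbnd t v)
    hbound_int
    (by
      filter_upwards with t v _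
      have h0 : HasDerivAt (fun z : ℂ => -(↑t * (↑x₀ + z * Complex.I)))
          (-(↑t * (1 * Complex.I))) (v : ℂ) :=
        ((((hasDerivAt_id _).mul_const _).const_add _).const_mul _).neg
      have hD : HasDerivAt (fun y : ℝ => Complex.exp (-(↑t * (↑x₀ + ↑y * Complex.I))))
          (-(↑t * Complex.I * Complex.exp (-(↑t * (↑x₀ + ↑v * Complex.I))))) v := by
        have h2 := h0.cexp.comp_ofReal
        convert h2 using 1
        ring
      have hD2 := (φ.toLinearMap.toContinuousLinearMap.hasFDerivAt.comp_hasDerivAt v hD)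
      exact hD2.const_mul (h t))
  -- integrability of `F x₁`
  refine hexp_int.mono' (hmeasg _ (by fun_prop)) ?_
  filter_upwards with t
  rw [hnormφ, Complex.norm_exp, hre]
  apply Real.exp_le_exp.2
  nlinarith [neg_abs_le (t * x₀), abs_mul t x₀, abs_nonneg t, abs_nonneg x₀,
    mul_le_mul_of_nonneg_left hx₀ (abs_nonneg t), hδ]

set_option maxHeartbeats 1000000 in
/-- The quaternionic bilateral Laplace–Stieltjes transform of a measure with
exponential moment is right slice regular on the corresponding strip:
for every imaginary unit `I`, the restriction to the slice `ℂ_I` satisfies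
`∂_{x₀} f_I + (∂_{x₁} f_I)·I = 0`. -/
theorem stmt13 (ω ε : ℝ) (hω : 0 ≤ ω) (hε : 0 < ε)
    (μ : VectorMeasure ℝ ℍ[ℝ])
    (m : Measure ℝ) [IsFiniteMeasure m] (h : ℝ → ℍ[ℝ])
    (hm : ∀ A : Set ℝ, MeasurableSet A → m A = qvar μ A)
    (hh : StronglyMeasurable h) (hh1 : ∀ t, ‖h t‖ = 1)
    (hrep : ∀ A : Set ℝ, MeasurableSet A → μ A = ∫ t in A, h t ∂m)
    (hgrowth : ∫⁻ t, ENNReal.ofReal (Real.exp ((ω + ε) * |t|)) ∂m < ⊤)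
    (f : ℍ[ℝ] → ℍ[ℝ])
    (hf : ∀ s, f s = ∫ t, h t * NormedSpace.exp (-(t • s)) ∂m) :
    ∀ I : ℍ[ℝ], QUnit I → ∀ x₀ x₁ : ℝ, -(ω + ε) < x₀ → x₀ < ω + ε →
      ∃ d₀ d₁ : ℍ[ℝ],
        HasDerivAt (fun u : ℝ => f ((u : ℍ[ℝ]) + x₁ • I)) d₀ x₀ ∧
        HasDerivAt (fun v : ℝ => f ((x₀ : ℍ[ℝ]) + v • I)) d₁ x₁ ∧
        d₀ + d₁ * I = 0 := by
  intro I hI x₀ x₁ hlo hhi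
  obtain ⟨hre0, hnorm1⟩ := hI
  set c := ω + ε with hc
  have hI2 : I * I = -1 := stmt13.aux_sq I hre0 hnorm1
  set φ : ℂ →ₐ[ℝ] ℍ[ℝ] := Complex.liftAux I hI2 with hφdef
  have hφnorm : ∀ z : ℂ, ‖φ z‖ = ‖z‖ := stmt13.aux_norm I hre0 hnorm1 hI2
  have hkey : ∀ u v t : ℝ, NormedSpace.exp (-(t • ((u : ℍ[ℝ]) + v • I)))
      = φ (Complex.exp (-(↑t * (↑u + ↑v * Complex.I)))) := stmt13.aux_exp I hI2
  -- the strip margin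
  set δ : ℝ := min (c - x₀) (x₀ + c) / 2 with hδdef
  have hδ : 0 < δ := by
    have h1 : 0 < c - x₀ := by linarith
    have h2 : 0 < x₀ + c := by linarith
    have := lt_min h1 h2
    positivity
  have habs : ∀ u ∈ Metric.ball x₀ δ, |u| ≤ c - δ := by
    intro u hu
    rw [Metric.mem_ball, Real.dist_eq, abs_lt] at hu
    have h1 : δ ≤ (c - x₀) / 2 := by
      rw [hδdef]
      have := min_le_left (c - x₀) (x₀ + c)
      linarith
    have h2 : δ ≤ (x₀ + c) / 2 := by
      rw [hδdef]
      have := min_le_right (c - x₀) (x₀ + c)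
      linarith
    rw [abs_le]
    constructor <;> linarith [hu.1, hu.2]
  have hx₀ : |x₀| ≤ c - δ := habs x₀ (Metric.mem_ball_self hδ)
  -- integrability of the exponential weight
  have hexp_cont : Continuous fun t : ℝ => Real.exp (c * |t|) :=
    Real.continuous_exp.comp (continuous_const.mul continuous_abs)
  have hexp_int : Integrable (fun t : ℝ => Real.exp (c * |t|)) m := by
    refine ⟨hexp_cont.aestronglyMeasurable, ?_⟩
    rw [HasFiniteIntegral]
    have heq : ∀ t : ℝ, (‖Real.exp (c * |t|)‖₊ : ℝ≥0∞) = ENNReal.ofReal (Real.exp (c * |t|)) := by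
      intro t
      rw [← enorm_eq_nnnorm, ← ofReal_norm, Real.norm_of_nonneg (Real.exp_nonneg _)]
    calc ∫⁻ t, (‖Real.exp (c * |t|)‖₊ : ℝ≥0∞) ∂m
        = ∫⁻ t, ENNReal.ofReal (Real.exp (c * |t|)) ∂m := lintegral_congr heq
      _ < ⊤ := hgrowth
  -- integrability of the dominating bound
  have hbound_cont : Continuous fun t : ℝ => |t| * Real.exp ((c - δ) * |t|) :=
    continuous_abs.mul (Real.continuous_exp.comp (continuous_const.mul continuous_abs))
  have hbound_int : Integrable (fun t : ℝ => |t| * Real.exp ((c - δ) * |t|)) m := by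
    refine (hexp_int.const_mul (1 / δ)).mono' hbound_cont.aestronglyMeasurable ?_
    filter_upwards with t
    rw [Real.norm_of_nonneg (by positivity)]
    have h1 : |t| ≤ 1 / δ * Real.exp (δ * |t|) := by
      rw [one_div, inv_mul_eq_div, le_div_iff₀ hδ]
      nlinarith [Real.add_one_le_exp (δ * |t|), abs_nonneg t]
    calc |t| * Real.exp ((c - δ) * |t|)
        ≤ 1 / δ * Real.exp (δ * |t|) * Real.exp ((c - δ) * |t|) := by gcongr
      _ = 1 / δ * Real.exp (c * |t|) := by
          rw [mul_assoc, ← Real.exp_add]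
          ring_nf
  obtain ⟨hint₁, hd₁⟩ := stmt13.aux_D1 m h hh hh1 φ hφnorm c δ x₀ x₁ hδ habs hexp_int hbound_int
  obtain ⟨hint₂, hd₂⟩ := stmt13.aux_D2 m h hh hh1 φ hφnorm c δ x₀ x₁ hδ hx₀ hexp_int hbound_int
  refine ⟨∫ t, h t * φ (-(↑t * Complex.exp (-(↑t * (↑x₀ + ↑x₁ * Complex.I))))) ∂m,
    ∫ t, h t * φ (-(↑t * Complex.I * Complex.exp (-(↑t * (↑x₀ + ↑x₁ * Complex.I))))) ∂m,
    ?_, ?_, ?_⟩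
  · have heq : (fun u : ℝ => f ((u : ℍ[ℝ]) + x₁ • I))
        = fun u : ℝ => ∫ t, h t * φ (Complex.exp (-(↑t * (↑u + ↑x₁ * Complex.I)))) ∂m := by
      funext u
      rw [hf]
      simp only [hkey]
    rw [heq]
    exact hd₁
  · have heq : (fun v : ℝ => f ((x₀ : ℍ[ℝ]) + v • I))
        = fun v : ℝ => ∫ t, h t * φ (Complex.exp (-(↑t * (↑x₀ + ↑v * Complex.I)))) ∂m := by
      funext v
      rw [hf]
      simp only [hkey]
    rw [heq]
    exact hd₂
  · -- the Cauchy–Riemann relation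
    have hφI : φ Complex.I = I := Complex.liftAux_apply_I I hI2
    have hmulI := ((LinearMap.mulRight ℝ I).toContinuousLinearMap).integral_comp_comm hint₂
    simp only [LinearMap.coe_toContinuousLinearMap', LinearMap.mulRight_apply] at hmulI
    rw [← hmulI]
    have heq2 : ∀ t : ℝ,
        h t * φ (-(↑t * Complex.I * Complex.exp (-(↑t * (↑x₀ + ↑x₁ * Complex.I))))) * I
        = -(h t * φ (-(↑t * Complex.exp (-(↑t * (↑x₀ + ↑x₁ * Complex.I)))))) := by
      intro t
      have hz : (-(↑t * Complex.I * Complex.exp (-(↑t * (↑x₀ + ↑x₁ * Complex.I))))) * Complex.I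
          = ↑t * Complex.exp (-(↑t * (↑x₀ + ↑x₁ * Complex.I))) := by
        linear_combination
          (-(↑t * Complex.exp (-(↑t * (↑x₀ + ↑x₁ * Complex.I))))) * Complex.I_mul_I
      calc h t * φ (-(↑t * Complex.I * Complex.exp (-(↑t * (↑x₀ + ↑x₁ * Complex.I))))) * I
          = h t * φ ((-(↑t * Complex.I * Complex.exp (-(↑t * (↑x₀ + ↑x₁ * Complex.I)))))
              * Complex.I) := by
            rw [map_mul, hφI, mul_assoc]
        _ = -(h t * φ (-(↑t * Complex.exp (-(↑t * (↑x₀ + ↑x₁ * Complex.I)))))) := by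
            rw [hz, map_neg, mul_neg, neg_neg]
    rw [integral_congr_ae (Filter.Eventually.of_forall heq2), integral_neg]
    exact add_neg_cancel _
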